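/- arXiv:2405.21047 — 4 statements merged into one kernel-verified Lean document; each statement's English description precedes it below -/
import Mathlib

section
/- With P, L, Q, and c as above, the chain-rule product of the reweighted conditionals recovers Q exactly: for every w ∈ Σ^n with P(prefix) > 0 at every step, ∏_{i=1}^{n} [ P(w_i | w_{1:i-1}) · c(w_{1:i}) / Σ_{w'} P(w' | w_{1:i-1}) · c(w_{1:i-1} w') ] = Q(w). -/
/-!
Since `Σ_a P(a | u) · c(ua) = c(u)`, the `i`-th factor equals `P(L ∩ w_{1:i+1}Σ*) / P(L ∩ w_{1:i}Σ*)`,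
so the product telescopes to `P(L ∩ {w}) / P(L) = Q(w)`. Prefixes of zero mass are
harmless: with `x / 0 = 0` both sides then vanish, because the mass `P(L ∩ uΣ*)` can only
decrease along `w`.
-/

open scoped BigOperators
open Finset Filter

namespace GAD

/-- Marginal probability of the prefix `u` under a distribution `P` on length-`n` strings. -/
noncomputable def marg {α : Type*} [Fintype α] (n : ℕ) (P : List α → ℝ) (u : List α) : ℝ :=
  ∑ v : Fin (n - u.length) → α, P (u ++ List.ofFn v)

/-- Marginal probability mass of completions of `u` that land in the language `L`. -/
noncomputable def margL {α : Type*} [Fintype α] (n : ℕ) (P : List α → ℝ) (L : Set (List α))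
    (u : List α) : ℝ :=
  ∑ v : Fin (n - u.length) → α, L.indicator P (u ++ List.ofFn v)

/-- Next-token conditional `P(a | u)`. -/
noncomputable def cond {α : Type*} [Fintype α] (n : ℕ) (P : List α → ℝ) (u : List α) (a : α) : ℝ :=
  marg n P (u ++ [a]) / marg n P u

/-- Expected future grammaticality `c(u) = Σ_v P(v | u) · 1[u ++ v ∈ L]`. -/
noncomputable def efg {α : Type*} [Fintype α] (n : ℕ) (P : List α → ℝ) (L : Set (List α))
    (u : List α) : ℝ :=
  margL n P L u / marg n P u

/-- `u` is a prefix of some string of the language `L`. -/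
def inPrefix {α : Type*} (L : Set (List α)) (u : List α) : Prop := ∃ v, u ++ v ∈ L

/-- Total probability mass of the language: `P(L)`. -/
noncomputable def PL {α : Type*} [Fintype α] (n : ℕ) (P : List α → ℝ) (L : Set (List α)) : ℝ :=
  margL n P L []

theorem prod_range_div₀ {K : Type*} [Field K] (g : ℕ → K) (n : ℕ) (h0 : g 0 ≠ 0)
    (hzero : ∀ i < n, g i = 0 → g (i + 1) = 0) :
    ∏ i ∈ range n, g (i + 1) / g i = g n / g 0 := by
  induction n with
  | zero => simp [h0]
  | succ m ih =>
    rw [prod_range_succ, ih fun i hi => hzero i (by omega)]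
    by_cases hm : g m = 0
    · simp [hm, hzero m (by omega) hm]
    · field_simp

theorem sum_ofFn_succ_eq_sum_sum_append {α M : Type*} [Fintype α] [AddCommMonoid M]
    (f : List α → M) (k : ℕ) (u : List α) :
    ∑ v : Fin (k + 1) → α, f (u ++ List.ofFn v)
      = ∑ a : α, ∑ v : Fin k → α, f (u ++ [a] ++ List.ofFn v) := by
  rw [← (Fin.consEquiv fun _ : Fin (k + 1) => α).sum_comp fun v => f (u ++ List.ofFn v),
    Fintype.sum_prod_type]
  simp [Fin.consEquiv, List.ofFn_succ]

section Marginals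

variable {α : Type*} [Fintype α] (n : ℕ) (P : List α → ℝ) (L : Set (List α))

theorem margL_eq_sum_append {u : List α} (hu : u.length < n) :
    margL n P L u = ∑ a : α, margL n P L (u ++ [a]) := by
  obtain ⟨k, hk⟩ : ∃ k, n - u.length = k + 1 := ⟨n - u.length - 1, by omega⟩
  have hk' (a : α) : n - (u ++ [a]).length = k := by simp; omega
  unfold margL
  rw [hk, sum_ofFn_succ_eq_sum_sum_append]
  refine sum_congr rfl fun a _ => ?_
  rw [hk' a]

theorem margL_of_length_eq {u : List α} (hu : u.length = n) :
    margL n P L u = L.indicator P u := by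
  simp [margL, hu]

variable {P}

theorem margL_nonneg (hP : ∀ w, 0 ≤ P w) (u : List α) : 0 ≤ margL n P L u :=
  sum_nonneg fun _ _ => Set.indicator_nonneg (fun w _ => hP w) _

theorem margL_le_marg (hP : ∀ w, 0 ≤ P w) (u : List α) : margL n P L u ≤ marg n P u :=
  sum_le_sum fun _ _ => Set.indicator_le_self' (fun w _ => hP w) _

theorem margL_eq_zero_of_marg_eq_zero (hP : ∀ w, 0 ≤ P w) {u : List α} (hu : marg n P u = 0) :
    margL n P L u = 0 :=
  le_antisymm (hu ▸ margL_le_marg n L hP u) (margL_nonneg n L hP u)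

theorem margL_append_le (hP : ∀ w, 0 ≤ P w) {u : List α} (hu : u.length < n) (a : α) :
    margL n P L (u ++ [a]) ≤ margL n P L u := by
  rw [margL_eq_sum_append n P L hu]
  exact single_le_sum (fun b _ => margL_nonneg n L hP (u ++ [b])) (mem_univ a)

theorem cond_mul_efg (hP : ∀ w, 0 ≤ P w) (u : List α) (a : α) :
    cond n P u a * efg n P L (u ++ [a]) = margL n P L (u ++ [a]) / marg n P u := by
  by_cases ha : marg n P (u ++ [a]) = 0
  · simp [cond, efg, ha, margL_eq_zero_of_marg_eq_zero n L hP ha]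
  · rw [cond, efg]
    field_simp

theorem sum_cond_mul_efg (hP : ∀ w, 0 ≤ P w) {u : List α} (hu : u.length < n) :
    ∑ a : α, cond n P u a * efg n P L (u ++ [a]) = efg n P L u := by
  rw [sum_congr rfl fun a _ => cond_mul_efg n L hP u a, ← sum_div, efg,
    ← margL_eq_sum_append n P L hu]

theorem cond_mul_efg_div_sum (hP : ∀ w, 0 ≤ P w) {u : List α} (hu : u.length < n) (a : α) :
    cond n P u a * efg n P L (u ++ [a]) / ∑ b : α, cond n P u b * efg n P L (u ++ [b])
      = margL n P L (u ++ [a]) / margL n P L u := by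
  rw [sum_cond_mul_efg n L hP hu, cond_mul_efg n L hP, efg]
  by_cases hm : marg n P u = 0
  · simp [hm, margL_eq_zero_of_marg_eq_zero n L hP hm]
  · exact div_div_div_cancel_right₀ hm _ _

end Marginals

theorem stmt1_general {α : Type*} [Fintype α] (n : ℕ) (P : List α → ℝ) (L : Set (List α))
    (hP : ∀ w, 0 ≤ P w) (hPL : 0 < PL n P L)
    (w : Fin n → α) :
    (∏ i : Fin n,
        cond n P ((List.ofFn w).take i) (w i) * efg n P L ((List.ofFn w).take i ++ [w i]) /
          ∑ a : α, cond n P ((List.ofFn w).take i) a * efg n P L ((List.ofFn w).take i ++ [a]))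
      = L.indicator P (List.ofFn w) / PL n P L := by
  set W := List.ofFn w
  set g : ℕ → ℝ := fun i => margL n P L (W.take i)
  have hlen (i : ℕ) (hi : i < n) : (W.take i).length < n := by simpa [W]
  have htake (i : Fin n) : W.take i ++ [w i] = W.take (i + 1) := by
    rw [List.take_add_one]
    simp [W]
  have hfactor (i : Fin n) :
      cond n P (W.take i) (w i) * efg n P L (W.take i ++ [w i]) /
        ∑ a : α, cond n P (W.take i) a * efg n P L (W.take i ++ [a]) = g (i + 1) / g i := by
    rw [cond_mul_efg_div_sum n L hP (hlen i i.isLt), htake]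
  have hzero (i : ℕ) (hi : i < n) (hgi : g i = 0) : g (i + 1) = 0 := by
    refine le_antisymm ?_ (margL_nonneg n L hP _)
    rw [← hgi]
    simpa only [g, htake ⟨i, hi⟩] using margL_append_le n L hP (hlen i hi) (w ⟨i, hi⟩)
  have hg0 : g 0 = PL n P L := rfl
  have hgn : g n = L.indicator P W := by
    have hW : W.length = n := by simp [W]
    simp only [g, List.take_of_length_le hW.le]
    exact margL_of_length_eq n P L hW
  rw [prod_congr rfl fun i _ => hfactor i, Fin.prod_univ_eq_prod_range (fun i => g (i + 1) / g i),
    prod_range_div₀ g n (hg0 ▸ hPL.ne') hzero, hg0, hgn]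

/-- The chain-rule product of the `c`-reweighted conditionals recovers `Q` exactly:
for every full string `w` whose prefixes all have positive `P`-marginal (and nonzero
normalizers), `∏_i P(w_i | w_{1:i-1})·c(w_{1:i}) / Σ_a P(a | w_{1:i-1})·c(w_{1:i-1}a) = Q(w)`. -/
theorem stmt1 {α : Type*} [Fintype α] (n : ℕ) (P : List α → ℝ) (L : Set (List α))
    (hP : ∀ w, 0 ≤ P w) (hPsum : ∑ w : Fin n → α, P (List.ofFn w) = 1)
    (hL : ∀ w ∈ L, w.length = n) (hPL : 0 < PL n P L)
    (w : Fin n → α)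
    (hmarg : ∀ i : ℕ, i ≤ n → 0 < marg n P ((List.ofFn w).take i))
    (hden : ∀ i : Fin n,
      (∑ a : α, cond n P ((List.ofFn w).take i) a * efg n P L ((List.ofFn w).take i ++ [a])) ≠ 0) :
    (∏ i : Fin n,
        cond n P ((List.ofFn w).take i) (w i) * efg n P L ((List.ofFn w).take i ++ [w i]) /
          ∑ a : α, cond n P ((List.ofFn w).take i) a * efg n P L ((List.ofFn w).take i ++ [a]))
      = L.indicator P (List.ofFn w) / PL n P L :=
  stmt1_general n P L hP hPL w

end GAD
end

section
/- With notation as above, for any prefix w_{1:i}, the gap between the ASAp approximation and the true expected future grammaticality equals the mass of unexplored extensions weighted by their non-membership: c̃_S(w_{1:i}) − c(w_{1:i}) = Σ_{w_{1:j} ∈ X_S(w_{1:i})} P(w_{i+1:j} | w_{1:i}) · (1 − c(w_{1:j})), where X_S(w_{1:i}) is the set of shortest extensions of w_{1:i} lying in L_prefix that are not prefixes of any string in S. -/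
open scoped BigOperators
open Finset Filter

namespace GAD

open Classical in
/-- ASAp approximation of expected future grammaticality, with fuel = remaining length. -/
noncomputable def ctildeAux {α : Type*} [Fintype α] (n : ℕ) (P : List α → ℝ) (L : Set (List α))
    (S : Finset (List α)) : ℕ → List α → ℝ
  | 0, u => Set.indicator L (fun _ => (1 : ℝ)) u
  | (k + 1), u =>
      if ∃ s ∈ S, u <+: s then
        ∑ a : α, cond n P u a * ctildeAux n P L S k (u ++ [a])
      else Set.indicator {t | inPrefix L t} (fun _ => (1 : ℝ)) u

/-- ASAp overapproximation `c̃_S`. -/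
noncomputable def ctilde {α : Type*} [Fintype α] (n : ℕ) (P : List α → ℝ) (L : Set (List α))
    (S : Finset (List α)) (u : List α) : ℝ :=
  ctildeAux n P L S (n - u.length) u

/-- The antichain of shortest extensions of `u` lying in `L_prefix` that are not prefixes of
any previously sampled string in `S` (every proper extension-prefix between `u` and `t`
is a prefix of some sample). -/
def XS {α : Type*} (L : Set (List α)) (S : Finset (List α)) (u : List α) : Set (List α) :=
  {t | u <+: t ∧ inPrefix L t ∧ (¬ ∃ s ∈ S, t <+: s) ∧
       ∀ t', u <+: t' → t' <+: t → t' ≠ t → ∃ s ∈ S, t' <+: s}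

/-!
Multiplied by `marg n P u`, both sides become additive over the next letter `a` as long as `u`
is a prefix of a sample: the left side by the recursions for `c̃_S` and `c`, the right side
because `X_S(u)` is the disjoint union of the `X_S(u ++ [a])`. Once `u` is no longer a prefix of
a sample, `c̃_S(u)` is the indicator of `L_prefix` and `X_S(u)` is `{u}` or empty; at full length
`X_S(u) ⊆ {u} ∩ L`, where `c = 1`.
-/

section Marginals

variable {α : Type*} [Fintype α]

lemma sum_ofFn_succ {M : Type*} [AddCommMonoid M] (f : List α → M) (m : ℕ) (u : List α) :
    ∑ v : Fin (m + 1) → α, f (u ++ List.ofFn v)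
      = ∑ a : α, ∑ v : Fin m → α, f (u ++ [a] ++ List.ofFn v) := by
  rw [← Fintype.sum_prod_type (f := fun p : α × (Fin m → α) => f (u ++ [p.1] ++ List.ofFn p.2))]
  refine (Fintype.sum_equiv (Fin.consEquiv fun _ => α) _ _ fun p => ?_).symm
  simp [List.ofFn_succ, Fin.consEquiv]

lemma marg_eq_sum_append_singleton (n : ℕ) (P : List α → ℝ) {u : List α} (h : u.length < n) :
    marg n P u = ∑ a : α, marg n P (u ++ [a]) := by
  have hsucc : n - u.length = n - (u.length + 1) + 1 := by omega
  have hlen : ∀ a : α, n - (u ++ [a]).length = n - (u.length + 1) := by simp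
  unfold marg
  rw [hsucc, sum_ofFn_succ]
  exact Finset.sum_congr rfl fun a _ => by rw [hlen a]

lemma margL_eq_marg_indicator (n : ℕ) (P : List α → ℝ) (L : Set (List α)) :
    margL n P L = marg n (L.indicator P) :=
  rfl

lemma marg_of_length_eq (n : ℕ) (P : List α → ℝ) {u : List α} (h : u.length = n) :
    marg n P u = P u := by
  simp [marg, h]

lemma marg_mul_cond (n : ℕ) (P : List α → ℝ) {u : List α} (h : marg n P u ≠ 0) (a : α) :
    marg n P u * cond n P u a = marg n P (u ++ [a]) :=
  mul_div_cancel₀ _ h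

lemma marg_mul_efg (n : ℕ) (P : List α → ℝ) (L : Set (List α)) {u : List α}
    (h : marg n P u ≠ 0) : marg n P u * efg n P L u = margL n P L u :=
  mul_div_cancel₀ _ h

lemma efg_of_length_eq (n : ℕ) (P : List α → ℝ) (L : Set (List α)) {u : List α}
    (h : u.length = n) (hu : marg n P u ≠ 0) :
    efg n P L u = L.indicator (fun _ => (1 : ℝ)) u := by
  rw [marg_of_length_eq n P h] at hu
  by_cases huL : u ∈ L <;>
    simp [efg, margL_eq_marg_indicator, marg_of_length_eq _ _ h, huL, hu]

lemma efg_of_not_inPrefix (n : ℕ) (P : List α → ℝ) {L : Set (List α)} {u : List α}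
    (h : ¬ inPrefix L u) : efg n P L u = 0 := by
  have hzero : margL n P L u = 0 :=
    Finset.sum_eq_zero fun v _ => Set.indicator_of_notMem (fun hv => h ⟨List.ofFn v, hv⟩) _
  simp [efg, hzero]

end Marginals

section Frontier

variable {α : Type*} {L : Set (List α)} {S : Finset (List α)} {u t : List α}

lemma mem_of_inPrefix_of_length_eq {n : ℕ} (hL : ∀ w ∈ L, w.length = n) (hu : inPrefix L u)
    (hlen : u.length = n) : u ∈ L := by
  obtain ⟨v, hv⟩ := hu
  have hv_nil : v = [] := List.eq_nil_of_length_eq_zero (by simpa [hlen] using hL _ hv)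
  simpa [hv_nil] using hv

lemma length_le_of_mem_XS {n : ℕ} (hL : ∀ w ∈ L, w.length = n) (ht : t ∈ XS L S u) :
    t.length ≤ n := by
  obtain ⟨v, hv⟩ := ht.2.1
  have := hL _ hv
  simp only [List.length_append] at this
  omega

lemma XS_finite [Finite α] {n : ℕ} (hL : ∀ w ∈ L, w.length = n) (S : Finset (List α)) (u : List α) :
    (XS L S u).Finite :=
  (List.finite_length_le α n).subset fun _ ht => length_le_of_mem_XS hL ht

lemma eq_of_mem_XS_of_not_prefix (h : ¬ ∃ s ∈ S, u <+: s) (ht : t ∈ XS L S u) : t = u := by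
  by_contra hne
  exact h (ht.2.2.2 u List.prefix_rfl ht.1 (Ne.symm hne))

lemma XS_eq_singleton (h : ¬ ∃ s ∈ S, u <+: s) (hu : inPrefix L u) : XS L S u = {u} := by
  refine Set.eq_singleton_iff_unique_mem.2 ⟨?_, fun _ ht => eq_of_mem_XS_of_not_prefix h ht⟩
  exact ⟨List.prefix_rfl, hu, h, fun t' hut' ht'u hne =>
    absurd (ht'u.eq_of_length (le_antisymm ht'u.length_le hut'.length_le)) hne⟩

lemma XS_eq_empty (h : ¬ ∃ s ∈ S, u <+: s) (hu : ¬ inPrefix L u) : XS L S u = ∅ :=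
  Set.eq_empty_of_forall_notMem fun _ ht =>
    hu (eq_of_mem_XS_of_not_prefix h ht ▸ ht.2.1)

lemma XS_eq_iUnion (h : ∃ s ∈ S, u <+: s) : XS L S u = ⋃ a : α, XS L S (u ++ [a]) := by
  ext t
  simp only [Set.mem_iUnion]
  constructor
  · rintro ⟨⟨w, rfl⟩, ht, hfresh, hmin⟩
    obtain ⟨a, w', rfl⟩ : ∃ a w', w = a :: w' := by
      cases w with
      | nil => exact absurd (by simpa using h) hfresh
      | cons a w' => exact ⟨a, w', rfl⟩
    exact ⟨a, ⟨w', by simp⟩, ht, hfresh, fun t' hut' ht't =>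
      hmin t' ((List.prefix_append u [a]).trans hut') ht't⟩
  · rintro ⟨a, hut, ht, hfresh, hmin⟩
    refine ⟨(List.prefix_append u [a]).trans hut, ht, hfresh, fun t' hut' ht't hne => ?_⟩
    rcases List.prefix_or_prefix_of_prefix ht't hut with ht'ua | hua
    · -- `u <+: t' <+: u ++ [a]` leaves only `t' = u` or `t' = u ++ [a]`
      have hlen := ht'ua.length_le
      simp only [List.length_append, List.length_singleton] at hlen
      rcases (Nat.le_succ_iff.1 hlen) with hlt | heq
      · rwa [← hut'.eq_of_length (le_antisymm hut'.length_le hlt)]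
      · rw [ht'ua.eq_of_length (by simp [heq])] at hne ⊢
        exact hmin _ List.prefix_rfl hut hne
    · exact hmin t' hua ht't hne

lemma pairwise_disjoint_XS_append_singleton (L : Set (List α)) (S : Finset (List α))
    (u : List α) : Pairwise (Function.onFun Disjoint fun a : α => XS L S (u ++ [a])) := by
  intro a b hab
  refine Set.disjoint_left.2 fun t hta htb => hab ?_
  rcases List.prefix_or_prefix_of_prefix hta.1 htb.1 with h | h
  · simpa using h.eq_of_length (by simp)
  · simpa using (h.eq_of_length (by simp)).symm

lemma finsum_mem_XS_eq_sum {M : Type*} [AddCommMonoid M] [Fintype α] {n : ℕ}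
    (hL : ∀ w ∈ L, w.length = n) (h : ∃ s ∈ S, u <+: s) (f : List α → M) :
    ∑ᶠ t ∈ XS L S u, f t = ∑ a : α, ∑ᶠ t ∈ XS L S (u ++ [a]), f t := by
  rw [XS_eq_iUnion h, finsum_mem_iUnion (pairwise_disjoint_XS_append_singleton L S u)
    (fun a => XS_finite hL S (u ++ [a])), finsum_eq_sum_of_fintype]

end Frontier

section Gap

variable {α : Type*} [Fintype α] {n : ℕ} {P : List α → ℝ} {L : Set (List α)}
  {S : Finset (List α)}

lemma marg_mul_ctildeAux_sub_efg (hL : ∀ w ∈ L, w.length = n)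
    (hmarg : ∀ v : List α, v.length ≤ n → 0 < marg n P v) (k : ℕ) (u : List α)
    (hk : u.length + k = n) :
    marg n P u * (ctildeAux n P L S k u - efg n P L u) =
      ∑ᶠ t ∈ XS L S u, marg n P t * (1 - efg n P L t) := by
  have hu : marg n P u ≠ 0 := (hmarg u (by omega)).ne'
  induction k generalizing u with
  | zero =>
    rw [ctildeAux, efg_of_length_eq n P L hk hu, sub_self, mul_zero, eq_comm]
    refine finsum_mem_eq_zero_of_forall_eq_zero fun t ht => ?_
    obtain rfl : u = t := ht.1.eq_of_length
      (by have := length_le_of_mem_XS hL ht; have := ht.1.length_le; omega)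
    rw [efg_of_length_eq n P L hk hu,
      Set.indicator_of_mem (mem_of_inPrefix_of_length_eq hL ht.2.1 hk), sub_self, mul_zero]
  | succ k ih =>
    by_cases hpre : ∃ s ∈ S, u <+: s
    · have hlen : ∀ a : α, (u ++ [a]).length + k = n := fun a => by simp; omega
      rw [ctildeAux, if_pos hpre, finsum_mem_XS_eq_sum hL hpre, mul_sub, Finset.mul_sum,
        marg_mul_efg n P L hu, margL_eq_marg_indicator,
        marg_eq_sum_append_singleton n (L.indicator P) (by omega), ← Finset.sum_sub_distrib]
      refine Finset.sum_congr rfl fun a _ => ?_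
      have hua : marg n P (u ++ [a]) ≠ 0 := (hmarg _ (by have := hlen a; omega)).ne'
      rw [← ih (u ++ [a]) (hlen a) hua, ← mul_assoc, marg_mul_cond n P hu, mul_sub,
        ← margL_eq_marg_indicator, ← marg_mul_efg n P L hua]
    · rw [ctildeAux, if_neg hpre]
      by_cases hp : inPrefix L u
      · rw [XS_eq_singleton hpre hp, finsum_mem_singleton, Set.indicator_of_mem (s := {t | inPrefix L t}) hp]
      · rw [XS_eq_empty hpre hp, finsum_mem_empty, Set.indicator_of_notMem (s := {t | inPrefix L t}) hp,
          efg_of_not_inPrefix n P hp, sub_zero, mul_zero]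

end Gap

theorem stmt6_general {α : Type*} [Fintype α] (n : ℕ) (P : List α → ℝ) (L : Set (List α))
    (hL : ∀ w ∈ L, w.length = n)
    (S : Finset (List α))
    (hmarg : ∀ v : List α, v.length ≤ n → 0 < marg n P v)
    (u : List α) (hu : u.length ≤ n) :
    ctilde n P L S u - efg n P L u =
      ∑ᶠ t ∈ XS L S u, (marg n P t / marg n P u) * (1 - efg n P L t) := by
  have hu0 : marg n P u ≠ 0 := (hmarg u hu).ne'
  have hgap := marg_mul_ctildeAux_sub_efg (S := S) hL hmarg (n - u.length) u (by omega)
  rw [ctilde, ← mul_right_inj' hu0, hgap, mul_finsum_mem]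
  refine finsum_mem_congr rfl fun t _ => ?_
  field_simp

/-- the gap between the ASAp overapproximation and the true expected future
grammaticality equals the probability mass of the unexplored extensions, weighted by their
non-membership: `c̃_S(u) − c(u) = Σ_{t ∈ X_S(u)} P(t | u)·(1 − c(t))`. -/
theorem stmt6 {α : Type*} [Fintype α] (n : ℕ) (P : List α → ℝ) (L : Set (List α))
    (hP : ∀ w, 0 ≤ P w) (hL : ∀ w ∈ L, w.length = n)
    (S : Finset (List α)) (hS : ↑S ⊆ L)
    (hmarg : ∀ v : List α, v.length ≤ n → 0 < marg n P v)
    (u : List α) (hu : u.length ≤ n) :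
    ctilde n P L S u - efg n P L u =
      ∑ᶠ t ∈ XS L S u, (marg n P t / marg n P u) * (1 - efg n P L t) :=
  stmt6_general n P L hL S hmarg u hu

end GAD
end

section
/- GCD is biased in general: there exists a finite alphabet Σ, a pmf P over Σ^n satisfying autoregressive factorization, and a language L ⊆ Σ^n, such that the GCD distribution Q̃_GCD differs from the grammar-aligned distribution Q = P(· | L). Concretely, with Σ = {0,1}, n = 5, P the product of i.i.d. Bernoulli(1/2) bits, and L = {00000} ∪ {1 b2 b3 b4 b5 : b_i ∈ {0,1}}, we have Q̃_GCD(00000) = 1/2 while Q(00000) = 1/17. -/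
/-!
Under the uniform prior every next-token conditional equals `1 / |Σ|`, so each GCD factor is
the reciprocal of the number of grammatical next tokens. Along `00000` there are two at the
first step and exactly one afterwards, whence `Q̃_GCD(00000) = 1/2`. The grammar-aligned
distribution instead weighs `00000` against all 17 words of `L`, each of mass `1/32`.
-/

open scoped BigOperators
open Finset Filter

namespace GAD

/-- The GCD sampling distribution: conditionals reweighted by the prefix-language indicator. -/
noncomputable def QGCD {α : Type*} [Fintype α] (n : ℕ) (P : List α → ℝ) (L : Set (List α))
    (w : Fin n → α) : ℝ :=
  ∏ i : Fin n,
    cond n P ((List.ofFn w).take i) (w i) *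
        Set.indicator {t | inPrefix L t} (fun _ => (1 : ℝ)) ((List.ofFn w).take i ++ [w i]) /
      ∑ a : α, cond n P ((List.ofFn w).take i) a *
        Set.indicator {t | inPrefix L t} (fun _ => (1 : ℝ)) ((List.ofFn w).take i ++ [a])

/-- Uniform (i.i.d. Bernoulli(1/2)) distribution on binary strings of length 5. -/
noncomputable def P10 : List Bool → ℝ := fun w => if w.length = 5 then (1 : ℝ) / 32 else 0

/-- The language `{00000} ∪ 1·{0,1}⁴` (false = 0, true = 1). -/
def L10 : Set (List Bool) :=
  {w | w = [false, false, false, false, false] ∨ (w.length = 5 ∧ w.head? = some true)}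

section UniformPrior

variable {α : Type*} [Fintype α] {n : ℕ} {P : List α → ℝ} {p : ℝ}

theorem marg_of_uniform (hP : ∀ w : List α, w.length = n → P w = p) {u : List α}
    (hu : u.length ≤ n) : marg n P u = Fintype.card α ^ (n - u.length) * p := by
  have hlen : ∀ v : Fin (n - u.length) → α, (u ++ List.ofFn v).length = n := fun v => by
    simp only [List.length_append, List.length_ofFn]; omega
  simp only [marg, hP _ (hlen _), Finset.sum_const, Finset.card_univ, Fintype.card_fun,
    Fintype.card_fin, nsmul_eq_mul, Nat.cast_pow]

theorem cond_of_uniform [Nonempty α] (hP : ∀ w : List α, w.length = n → P w = p) (hp : p ≠ 0)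
    {u : List α} (hu : u.length < n) (a : α) : cond n P u a = (Fintype.card α : ℝ)⁻¹ := by
  have hα : (Fintype.card α : ℝ) ≠ 0 := Nat.cast_ne_zero.mpr Fintype.card_ne_zero
  rw [cond, marg_of_uniform hP (by simpa using hu), marg_of_uniform hP hu.le,
    List.length_append, List.length_singleton,
    show n - u.length = n - (u.length + 1) + 1 by omega, pow_succ]
  field_simp

theorem PL_of_uniform (hP : ∀ w : List α, w.length = n → P w = p) (L : Set (List α))
    [DecidablePred (· ∈ L)] : PL n P L = #{v : Fin n → α | List.ofFn v ∈ L} * p := by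
  rw [PL, margL, Finset.card_filter, Nat.cast_sum, Finset.sum_mul]
  refine Finset.sum_congr rfl fun v _ => ?_
  rw [List.nil_append, Set.indicator_apply]
  split_ifs <;> simp [hP]

end UniformPrior

open Classical in
noncomputable def nextTokens {α : Type*} [Fintype α] (L : Set (List α)) (u : List α) :
    Finset α :=
  {a | inPrefix L (u ++ [a])}

theorem QGCD_of_cond_const {α : Type*} [Fintype α] {n : ℕ} {P : List α → ℝ}
    {L : Set (List α)} {c : ℝ} (hc : c ≠ 0) (w : Fin n → α)
    (hcond : ∀ (i : Fin n) (a : α), cond n P ((List.ofFn w).take i) a = c)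
    (hw : ∀ i : Fin n, inPrefix L ((List.ofFn w).take i ++ [w i])) :
    QGCD n P L w = ∏ i : Fin n, ((#(nextTokens L ((List.ofFn w).take i)) : ℕ) : ℝ)⁻¹ := by
  classical
  refine Finset.prod_congr rfl fun i _ => ?_
  have hden : ∑ a : α, c * Set.indicator {t | inPrefix L t} (fun _ => (1 : ℝ))
      ((List.ofFn w).take i ++ [a]) = c * #(nextTokens L ((List.ofFn w).take i)) := by
    rw [← Finset.mul_sum, nextTokens, Finset.card_filter, Nat.cast_sum]
    simp only [Set.indicator_apply, Set.mem_ofPred_eq, Nat.cast_ite, Nat.cast_one, Nat.cast_zero]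
  simp only [hcond, hden, Set.indicator_of_mem (show _ ∈ {t | inPrefix L t} from hw i)]
  field_simp

instance : DecidablePred (· ∈ L10) := fun w =>
  decidable_of_iff (w = [false, false, false, false, false] ∨
    (w.length = 5 ∧ w.head? = some true)) Iff.rfl

theorem P10_of_length {w : List Bool} (hw : w.length = 5) : P10 w = 1 / 32 := if_pos hw

theorem inPrefix_L10_replicate {k : ℕ} (hk : k ≤ 5) : inPrefix L10 (List.replicate k false) := by
  refine ⟨List.replicate (5 - k) false, Or.inl ?_⟩
  rw [← List.replicate_add, Nat.add_sub_cancel' hk]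
  rfl

theorem not_inPrefix_L10_replicate_append_true {k : ℕ} (hk : 1 ≤ k) :
    ¬ inPrefix L10 (List.replicate k false ++ [true]) := by
  obtain ⟨k, rfl⟩ : ∃ j, k = j + 1 := ⟨k - 1, by omega⟩
  rintro ⟨v, hv | ⟨-, hhead⟩⟩
  · have : true ∈ [false, false, false, false, false] := hv ▸ by simp
    simp at this
  · simp [List.replicate_succ] at hhead

theorem nextTokens_L10_nil : nextTokens L10 [] = Finset.univ := by
  refine Finset.eq_univ_of_forall fun a => ?_
  simp only [nextTokens, Finset.mem_filter, Finset.mem_univ, true_and, List.nil_append]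
  cases a
  · exact inPrefix_L10_replicate (k := 1) (by norm_num)
  · exact ⟨List.replicate 4 false, Or.inr ⟨rfl, rfl⟩⟩

theorem nextTokens_L10_replicate {k : ℕ} (hk₁ : 1 ≤ k) (hk₄ : k ≤ 4) :
    nextTokens L10 (List.replicate k false) = {false} := by
  ext a
  simp only [nextTokens, Finset.mem_filter, Finset.mem_univ, true_and, Finset.mem_singleton]
  cases a
  · simpa [← List.replicate_succ'] using inPrefix_L10_replicate (k := k + 1) (by omega)
  · simpa using not_inPrefix_L10_replicate_append_true hk₁

theorem QGCD_zeros : QGCD 5 P10 L10 (fun _ => false) = 1 / 2 := by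
  have htake : ∀ i : Fin 5, (List.ofFn fun _ : Fin 5 => false).take i = List.replicate i false :=
    fun i => by rw [List.ofFn_const, List.take_replicate, min_eq_left i.is_lt.le]
  have hcond : ∀ (i : Fin 5) (a : Bool),
      cond 5 P10 ((List.ofFn fun _ : Fin 5 => false).take i) a = 2⁻¹ := fun i a => by
    rw [htake, cond_of_uniform (fun _ => P10_of_length) (by norm_num) (by simp)]
    simp
  have hw : ∀ i : Fin 5,
      inPrefix L10 ((List.ofFn fun _ : Fin 5 => false).take i ++ [false]) := fun i => by
    rw [htake, ← List.replicate_succ']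
    exact inPrefix_L10_replicate i.is_lt
  have hforced : ∀ j : Fin 4,
      ((#(nextTokens L10 ((List.ofFn fun _ : Fin 5 => false).take j.succ)) : ℕ) : ℝ)⁻¹ = 1 :=
    fun j => by rw [htake, Fin.val_succ, nextTokens_L10_replicate (by omega) (by omega)]; simp
  rw [QGCD_of_cond_const (by norm_num) _ hcond hw, Fin.prod_univ_succ, htake, Fin.val_zero,
    List.replicate_zero, nextTokens_L10_nil, Finset.prod_congr rfl fun j _ => hforced j]
  simp

theorem PL_L10 : PL 5 P10 L10 = 17 / 32 := by
  rw [PL_of_uniform (fun _ => P10_of_length), show #{v : Fin 5 → Bool | List.ofFn v ∈ L10} = 17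
    by decide]
  norm_num

/-- GCD is biased in general: for the uniform distribution on `{0,1}^5` and
`L = {00000} ∪ 1·{0,1}^4`, the GCD distribution assigns `Q̃_GCD(00000) = 1/2` whereas the
grammar-aligned distribution assigns `Q(00000) = 1/17`; in particular they differ. -/
theorem stmt10 :
    QGCD 5 P10 L10 (fun _ => false) = 1 / 2 ∧
    L10.indicator P10 (List.ofFn (fun _ => false : Fin 5 → Bool)) / PL 5 P10 L10 = 1 / 17 ∧
    QGCD 5 P10 L10 (fun _ => false) ≠
      L10.indicator P10 (List.ofFn (fun _ => false : Fin 5 → Bool)) / PL 5 P10 L10 := by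
  have hzeros : List.ofFn (fun _ => false : Fin 5 → Bool) ∈ L10 := Or.inl rfl
  have hQ : L10.indicator P10 (List.ofFn (fun _ => false : Fin 5 → Bool)) / PL 5 P10 L10 =
      1 / 17 := by
    rw [Set.indicator_of_mem hzeros, P10_of_length (by simp), PL_L10]
    norm_num
  refine ⟨QGCD_zeros, hQ, ?_⟩
  rw [QGCD_zeros, hQ]
  norm_num

end GAD
end

section
/- Monotonicity of the ASAp overapproximation: if S ⊆ S' are finite subsets of L, then for every prefix w_{1:i}, c̃_{S'}(w_{1:i}) ≤ c̃_S(w_{1:i}). That is, adding samples can only tighten the overapproximation of the expected future grammaticality. -/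
open scoped BigOperators
open Finset Filter

namespace GAD

/- `c̃_S` and `c̃_{S'}` obey the same recursion at every prefix of a sample of `S`. At a prefix of
a sample of `S'` only, `c̃_S` is `1` (samples of `S'` lie in `L`), while `c̃_{S'}` is a
`P(· | u)`-average of values that are at most `1`. Induct on the remaining length. -/

section

variable {α : Type*} [Fintype α] {n : ℕ} {P : List α → ℝ}

lemma marg_nonneg (hP : ∀ w, 0 ≤ P w) (u : List α) : 0 ≤ marg n P u :=
  Finset.sum_nonneg fun _ _ => hP _

lemma cond_nonneg (hP : ∀ w, 0 ≤ P w) (u : List α) (a : α) : 0 ≤ cond n P u a :=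
  div_nonneg (marg_nonneg hP _) (marg_nonneg hP _)

lemma sum_pi_fin_succ_ofFn {M : Type*} [AddCommMonoid M] (k : ℕ) (f : List α → M) :
    ∑ v : Fin (k + 1) → α, f (List.ofFn v) = ∑ a : α, ∑ w : Fin k → α, f (a :: List.ofFn w) := by
  rw [← Fintype.sum_prod_type']
  exact (Fintype.sum_equiv (Fin.consEquiv fun _ => α) _ _
    (fun p => by simp [Fin.consEquiv, List.ofFn_succ])).symm

lemma marg_eq_sum_marg_append (u : List α) (hu : u.length < n) :
    marg n P u = ∑ a : α, marg n P (u ++ [a]) := by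
  obtain ⟨k, hk⟩ : ∃ k, n - u.length = k + 1 := ⟨n - u.length - 1, by omega⟩
  have hlen (a : α) : n - (u ++ [a]).length = k := by grind
  unfold marg
  rw [hk, sum_pi_fin_succ_ofFn k (fun l => P (u ++ l))]
  refine Finset.sum_congr rfl fun a _ => ?_
  rw [hlen a]
  simp

lemma sum_cond_eq_one (u : List α) (hu : u.length < n) (hmarg : 0 < marg n P u) :
    ∑ a : α, cond n P u a = 1 := by
  simp only [cond]
  rw [← Finset.sum_div, ← marg_eq_sum_marg_append u hu, div_self hmarg.ne']

lemma sum_cond_mul_le_one (hP : ∀ w, 0 ≤ P w) (u : List α) (hu : u.length < n)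
    (hmarg : 0 < marg n P u) {f : α → ℝ} (hf : ∀ a, f a ≤ 1) :
    ∑ a : α, cond n P u a * f a ≤ 1 :=
  calc ∑ a : α, cond n P u a * f a
      ≤ ∑ a : α, cond n P u a := Finset.sum_le_sum fun a _ =>
        mul_le_of_le_one_right (cond_nonneg hP u a) (hf a)
    _ = 1 := sum_cond_eq_one u hu hmarg

variable {L : Set (List α)}

lemma ctildeAux_le_one (hP : ∀ w, 0 ≤ P w) (hmarg : ∀ u : List α, u.length ≤ n → 0 < marg n P u)
    (S : Finset (List α)) (k : ℕ) (u : List α) (hu : u.length + k ≤ n) :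
    ctildeAux n P L S k u ≤ 1 := by
  induction k generalizing u with
  | zero => exact Set.indicator_le_self' (fun _ _ => zero_le_one) u
  | succ k ih =>
    rw [ctildeAux]
    split_ifs
    · exact sum_cond_mul_le_one hP u (by omega) (hmarg u (by omega))
        fun a => ih _ (by grind)
    · exact Set.indicator_le_self' (fun _ _ => zero_le_one) u

lemma ctildeAux_antitone (hP : ∀ w, 0 ≤ P w)
    (hmarg : ∀ u : List α, u.length ≤ n → 0 < marg n P u)
    {S S' : Finset (List α)} (hS' : ↑S' ⊆ L) (hSS' : S ⊆ S') (k : ℕ) (u : List α)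
    (hu : u.length + k ≤ n) : ctildeAux n P L S' k u ≤ ctildeAux n P L S k u := by
  induction k generalizing u with
  | zero => exact le_rfl
  | succ k ih =>
    rw [ctildeAux, ctildeAux]
    by_cases hS : ∃ s ∈ S, u <+: s
    · have hS'u : ∃ s ∈ S', u <+: s := hS.imp fun s ⟨hs, hus⟩ => ⟨hSS' hs, hus⟩
      rw [if_pos hS, if_pos hS'u]
      exact Finset.sum_le_sum fun a _ =>
        mul_le_mul_of_nonneg_left (ih _ (by grind)) (cond_nonneg hP u a)
    · rw [if_neg hS]
      split_ifs with hS'u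
      · obtain ⟨s, hs, v, rfl⟩ := hS'u
        rw [Set.indicator_of_mem (show u ∈ {t | inPrefix L t} from ⟨v, hS' hs⟩)]
        exact sum_cond_mul_le_one hP u (by omega) (hmarg u (by omega))
          fun a => ctildeAux_le_one hP hmarg S' k _ (by grind)
      · exact le_rfl

end

theorem stmt12_general {α : Type*} [Fintype α] (n : ℕ) (P : List α → ℝ) (L : Set (List α))
    (hP : ∀ w, 0 ≤ P w)
    (hmarg : ∀ u : List α, u.length ≤ n → 0 < marg n P u)
    (S S' : Finset (List α)) (hS' : ↑S' ⊆ L) (hSS' : S ⊆ S') :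
    ∀ u : List α, u.length ≤ n → ctilde n P L S' u ≤ ctilde n P L S u :=
  fun u hu => ctildeAux_antitone hP hmarg hS' hSS' (n - u.length) u (by omega)

/-- Monotonicity of the ASAp overapproximation: if `S ⊆ S'` then
`c̃_{S'}(u) ≤ c̃_S(u)` for every prefix `u`; adding samples only tightens the bound. -/
theorem stmt12 {α : Type*} [Fintype α] (n : ℕ) (P : List α → ℝ) (L : Set (List α))
    (hP : ∀ w, 0 ≤ P w) (hL : ∀ w ∈ L, w.length = n)
    (hmarg : ∀ u : List α, u.length ≤ n → 0 < marg n P u)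
    (S S' : Finset (List α)) (hS' : ↑S' ⊆ L) (hSS' : S ⊆ S') :
    ∀ u : List α, u.length ≤ n → ctilde n P L S' u ≤ ctilde n P L S u :=
  stmt12_general n P L hP hmarg S S' hS' hSS'

end GAD
end
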